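/- arXiv:2106.07406 — 2 statements merged into one kernel-verified Lean document; each statement's English description precedes it below -/
import Mathlib

section
/- For a driver starting just after a daily rest, the minimum total stop time needed to feasibly complete T hours of driving (with T ≤ 56, so no weekly rest required) under the continuous driving rule (break of 0.75 h after at most 4.5 h driving) and daily driving rule (rest of 11 h after at most 9 h driving) is at least 11·(⌈T/9⌉ − 1) + 0.75·max(0, ⌈T/4.5⌉ − ⌈T/9⌉) hours. -/
/-- A feasible schedule with total driving time T ≤ 56 (no weekly
rest needed), starting just after a daily rest, with nb breaks (each ≥ 0.75 h)
and nd daily rests (each ≥ 11 h): the continuous driving rule partitions T into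
nb+nd+1 segments of at most 4.5 h, and the daily rule into nd+1 segments of at
most 9 h.  The total stop time is then at least
11·(⌈T/9⌉ − 1) + 0.75·max(0, ⌈T/4.5⌉ − ⌈T/9⌉). -/
theorem stmt_5 (T stopTime : ℝ) (hT : 0 < T) (hT56 : T ≤ 56)
    (nb nd : ℕ)
    (cseg dseg bdur rdur : ℕ → ℝ)
    (hcseg : ∀ i < nb + nd + 1, 0 ≤ cseg i ∧ cseg i ≤ 4.5)
    (hcsum : ∑ i ∈ Finset.range (nb + nd + 1), cseg i = T)
    (hdseg : ∀ i < nd + 1, 0 ≤ dseg i ∧ dseg i ≤ 9)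
    (hdsum : ∑ i ∈ Finset.range (nd + 1), dseg i = T)
    (hbdur : ∀ i < nb, 0.75 ≤ bdur i)
    (hrdur : ∀ i < nd, 11 ≤ rdur i)
    (hstop : stopTime
      = ∑ i ∈ Finset.range nb, bdur i + ∑ i ∈ Finset.range nd, rdur i) :
    11 * ((⌈T / 9⌉ : ℝ) - 1)
      + 0.75 * max 0 ((⌈T / 4.5⌉ : ℝ) - (⌈T / 9⌉ : ℝ)) ≤ stopTime := by
  have hsumb : (0.75 : ℝ) * nb ≤ ∑ i ∈ Finset.range nb, bdur i := by
    calc (0.75:ℝ) * nb = ∑ _i ∈ Finset.range nb, (0.75:ℝ) := by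
          rw [Finset.sum_const, Finset.card_range, nsmul_eq_mul, mul_comm]
      _ ≤ _ := Finset.sum_le_sum fun i hi => hbdur i (Finset.mem_range.mp hi)
  have hsumd : (11 : ℝ) * nd ≤ ∑ i ∈ Finset.range nd, rdur i := by
    calc (11:ℝ) * nd = ∑ _i ∈ Finset.range nd, (11:ℝ) := by
          rw [Finset.sum_const, Finset.card_range, nsmul_eq_mul, mul_comm]
      _ ≤ _ := Finset.sum_le_sum fun i hi => hrdur i (Finset.mem_range.mp hi)
  have hT9 : T ≤ 9 * (nd + 1 : ℝ) := by
    calc T = ∑ i ∈ Finset.range (nd + 1), dseg i := hdsum.symm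
      _ ≤ ∑ _i ∈ Finset.range (nd + 1), (9:ℝ) :=
          Finset.sum_le_sum fun i hi => (hdseg i (Finset.mem_range.mp hi)).2
      _ = 9 * (nd + 1 : ℝ) := by
          rw [Finset.sum_const, Finset.card_range, nsmul_eq_mul, mul_comm]
          push_cast; ring
  have hT45 : T ≤ 4.5 * (nb + nd + 1 : ℝ) := by
    calc T = ∑ i ∈ Finset.range (nb + nd + 1), cseg i := hcsum.symm
      _ ≤ ∑ _i ∈ Finset.range (nb + nd + 1), (4.5:ℝ) :=
          Finset.sum_le_sum fun i hi => (hcseg i (Finset.mem_range.mp hi)).2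
      _ = 4.5 * (nb + nd + 1 : ℝ) := by
          rw [Finset.sum_const, Finset.card_range, nsmul_eq_mul, mul_comm]
          push_cast; ring
  have hc9 : (⌈T / 9⌉ : ℝ) ≤ (nd : ℝ) + 1 := by
    have : ⌈T / 9⌉ ≤ ((nd : ℤ) + 1) := by
      apply Int.ceil_le.mpr
      rw [div_le_iff₀ (by norm_num : (0:ℝ) < 9)]
      push_cast; linarith
    exact_mod_cast (by exact_mod_cast this : (⌈T / 9⌉ : ℝ) ≤ ((nd : ℤ) + 1 : ℤ))
  have hc45 : (⌈T / 4.5⌉ : ℝ) ≤ (nb : ℝ) + nd + 1 := by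
    have : ⌈T / 4.5⌉ ≤ ((nb : ℤ) + nd + 1) := by
      apply Int.ceil_le.mpr
      rw [div_le_iff₀ (by norm_num : (0:ℝ) < 4.5)]
      push_cast; linarith
    exact_mod_cast (by exact_mod_cast this : (⌈T / 4.5⌉ : ℝ) ≤ ((nb : ℤ) + nd + 1 : ℤ))
  have hc1 : (1 : ℝ) ≤ (⌈T / 9⌉ : ℝ) := by
    have : (1 : ℤ) ≤ ⌈T / 9⌉ := Int.ceil_pos.mpr (by positivity)
    exact_mod_cast this
  rcases le_total ((⌈T / 4.5⌉ : ℝ) - (⌈T / 9⌉ : ℝ)) 0 with h | h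
  · rw [max_eq_left h]
    linarith
  · rw [max_eq_right h]
    linarith
end

section
/- Given n refueling stations along a fixed route at positions 0 ≤ x_1 < ... < x_n ≤ D with prices p_i, an initial fuel f_0, capacity τ, consumption rate φ, and the full-tank policy, the greedy choice of always refueling at the cheapest reachable station before running out of fuel produces a fuel-feasible plan whenever some fuel-feasible plan exists (i.e., consecutive reachable gaps never exceed τ/φ and x_1 ≤ f_0/φ when φD > f_0). -/
/-!
From the current position (the start or the last stop) either the destination is within range,
or, by the gap hypotheses, the next station is. In the second case stop at a cheapest station
among the finitely many within range and continue from there. Every leg is within range by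
construction, and the index of the current stop strictly increases, so the process terminates.
-/

namespace Refueling

structure Route (n : ℕ) where
  D : ℝ
  τ : ℝ
  f0 : ℝ
  φ : ℝ
  x : Fin n → ℝ
  p : Fin n → ℝ

namespace Route

variable {n : ℕ} (R : Route n)

/- A state of the vehicle is an `Option (Fin n)`: `none` is the start of the route with fuel
`f0`, `some c` is a stop at station `c` with a full tank. -/

def CanReach : Option (Fin n) → Fin n → Prop
  | none, i => R.φ * R.x i ≤ R.f0
  | some c, i => c < i ∧ R.φ * (R.x i - R.x c) ≤ R.τ

def CanFinish : Option (Fin n) → Prop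
  | none => R.φ * R.D ≤ R.f0
  | some c => R.φ * (R.D - R.x c) ≤ R.τ

def IsCheapestNext (o : Option (Fin n)) (i : Fin n) : Prop :=
  R.CanReach o i ∧ ∀ j, R.CanReach o j → R.p i ≤ R.p j

def IsGreedyPlan (o : Option (Fin n)) (k : ℕ) (idx : Fin k → Fin n) : Prop :=
  StrictMono idx ∧
  (k = 0 → R.CanFinish o) ∧
  (∀ h : 0 < k, R.IsCheapestNext o (idx ⟨0, h⟩)) ∧
  (∀ (j : Fin k) (h : j.1 + 1 < k), R.IsCheapestNext (some (idx j)) (idx ⟨j.1 + 1, h⟩)) ∧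
  (∀ h : 0 < k, R.CanFinish (some (idx ⟨k - 1, Nat.sub_lt h one_pos⟩)))

theorem exists_isCheapestNext {o : Option (Fin n)} {i : Fin n} (hi : R.CanReach o i) :
    ∃ i, R.IsCheapestNext o i :=
  let ⟨i, hi, hmin⟩ := Set.exists_min_image {i | R.CanReach o i} R.p (Set.toFinite _) ⟨i, hi⟩
  ⟨i, hi, hmin⟩

theorem isGreedyPlan_nil {o : Option (Fin n)} (h : R.CanFinish o) :
    R.IsGreedyPlan o 0 Fin.elim0 :=
  ⟨fun a => a.elim0, fun _ => h, fun h => absurd h (lt_irrefl 0), fun j => j.elim0,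
    fun h => absurd h (lt_irrefl 0)⟩

variable {R} in
theorem IsGreedyPlan.cons {o : Option (Fin n)} {i : Fin n} {k : ℕ} {idx : Fin k → Fin n}
    (hi : R.IsCheapestNext o i) (hplan : R.IsGreedyPlan (some i) k idx) :
    R.IsGreedyPlan o (k + 1) (Fin.cons i idx) := by
  obtain ⟨hmono, hnil, hfirst, hstep, hlast⟩ := hplan
  refine ⟨Fin.strictMono_cons.2 ⟨fun j => ?_, hmono⟩, (absurd · k.succ_ne_zero), fun _ => hi, ?_, ?_⟩
  · exact (hfirst j.pos).1.1.trans_le (hmono.monotone (Nat.zero_le _))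
  · rintro ⟨_ | j, hj⟩ h
    · exact hfirst (by omega)
    · exact hstep ⟨j, by omega⟩ (Nat.succ_lt_succ_iff.1 h)
  · intro _
    rcases k with _ | k
    · exact hnil rfl
    · exact hlast (Nat.succ_pos k)

theorem exists_isGreedyPlan_of_canReach {o : Option (Fin n)}
    (hreach : ¬ R.CanFinish o → ∃ i, R.CanReach o i)
    (hcont : ∀ i, R.CanReach o i → ∃ k idx, R.IsGreedyPlan (some i) k idx) :
    ∃ k idx, R.IsGreedyPlan o k idx := by
  by_cases hfin : R.CanFinish o
  · exact ⟨0, Fin.elim0, R.isGreedyPlan_nil hfin⟩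
  obtain ⟨_, hreach⟩ := hreach hfin
  obtain ⟨i, hi⟩ := R.exists_isCheapestNext hreach
  obtain ⟨k, idx, hplan⟩ := hcont i hi.1
  exact ⟨k + 1, Fin.cons i idx, hplan.cons hi⟩

theorem exists_isGreedyPlan_some
    (hgap : ∀ i : Fin n, ∀ h : i.1 + 1 < n, R.φ * (R.x ⟨i.1 + 1, h⟩ - R.x i) ≤ R.τ)
    (hlast : ∀ h : 0 < n, R.φ * (R.D - R.x ⟨n - 1, Nat.sub_lt h one_pos⟩) ≤ R.τ) (c : Fin n) :
    ∃ k idx, R.IsGreedyPlan (some c) k idx := by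
  induction c using WellFoundedGT.induction with
  | _ c ih =>
    refine R.exists_isGreedyPlan_of_canReach (fun hfin => ?_) fun i hi => ih i hi.1
    have hc : c.1 + 1 < n := by
      by_contra hc
      have hc_last : c = ⟨n - 1, Nat.sub_lt c.pos one_pos⟩ := Fin.ext (show c.1 = n - 1 by omega)
      exact hfin (hc_last ▸ hlast c.pos)
    exact ⟨⟨c.1 + 1, hc⟩, Fin.lt_def.2 (Nat.lt_succ_self _), hgap c hc⟩

end Route

end Refueling

/-- Greedy refueling is well-defined whenever some feasible plan
exists.  Along a route of length D with stations at positions x 0 < ... <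
x (n-1), prices p, initial fuel f₀ ≤ τ and consumption rate φ, if x 0 ≤ f₀/φ
(when φ·D > f₀) and no consecutive gap (including the final leg) exceeds τ/φ,
then there exists a fuel-feasible plan (a strictly increasing selection of
stations, full tank at each stop) which is greedy: each chosen stop is a
cheapest station among those reachable from the previous stop. -/
theorem stmt_18 (n : ℕ) (hn : 0 < n) (D τ f0 φ : ℝ)
    (x p : Fin n → ℝ)
    (hfirst : f0 < φ * D → φ * x ⟨0, hn⟩ ≤ f0)
    (hgap : ∀ i : Fin n, ∀ h : i.1 + 1 < n, φ * (x ⟨i.1 + 1, h⟩ - x i) ≤ τ)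
    (hlast : φ * (D - x ⟨n - 1, by omega⟩) ≤ τ) :
    ∃ (k : ℕ) (idx : Fin k → Fin n), StrictMono idx ∧
      -- fuel-feasibility of the plan
      ((k = 0 → φ * D ≤ f0) ∧
       (∀ h : 0 < k, φ * x (idx ⟨0, h⟩) ≤ f0) ∧
       (∀ j : Fin k, ∀ h : j.1 + 1 < k,
          φ * (x (idx ⟨j.1 + 1, h⟩) - x (idx j)) ≤ τ) ∧
       (∀ h : 0 < k, φ * (D - x (idx ⟨k - 1, by omega⟩)) ≤ τ)) ∧
      -- greediness: each stop is a cheapest reachable station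
      ((∀ h : 0 < k, ∀ i : Fin n, φ * x i ≤ f0 → p (idx ⟨0, h⟩) ≤ p i) ∧
       (∀ j : Fin k, ∀ h : j.1 + 1 < k, ∀ i : Fin n,
          idx j < i → φ * (x i - x (idx j)) ≤ τ →
          p (idx ⟨j.1 + 1, h⟩) ≤ p i)) := by
  let R : Refueling.Route n := ⟨D, τ, f0, φ, x, p⟩
  obtain ⟨k, idx, hmono, hnil, hstart, hstep, hend⟩ :=
    R.exists_isGreedyPlan_of_canReach (o := none)
      (fun hfin => ⟨⟨0, hn⟩, hfirst (not_le.1 hfin)⟩)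
      (fun i _ => R.exists_isGreedyPlan_some hgap (fun _ => hlast) i)
  exact ⟨k, idx, hmono, ⟨hnil, fun h => (hstart h).1, fun j h => (hstep j h).1.2, hend⟩,
    fun h => (hstart h).2, fun j h i hi hreach => (hstep j h).2 i ⟨hi, hreach⟩⟩
end
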